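/- The variety of semilattices is not a derived variety of the variety V₁ of bands satisfying z·x·y = z·y·x: there is no hypersubstitution σ of type (2) such that the derived variety (V₁)_σ equals the variety of commutative bands. Concretely, for each of the six band-term hypersubstitutions σ (sending xy to x, y, xy, yx, xyx, or yxy), either (V₁)_σ fails commutativity or it is trivial-incompatible; in particular the derived identity σ(xy) ≈ σ(yx) for σ(xy) = xyx (i.e., x·y·x ≈ y·x·y) fails in V₁. -/
import Mathlib


/-- An algebra of type (2). -/
structure MagmaAlg where
  carrier : Type
  mul : carrier → carrier → carrier

/-- Terms of type (2) over countably many variables. -/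
inductive MTerm : Type
  | var (n : ℕ)
  | mul (s t : MTerm)

def MagmaAlg.eval (A : MagmaAlg) (env : ℕ → A.carrier) : MTerm → A.carrier
  | .var n => env n
  | .mul s t => A.mul (A.eval env s) (A.eval env t)

def sat (A : MagmaAlg) (p q : MTerm) : Prop :=
  ∀ env : ℕ → A.carrier, A.eval env p = A.eval env q

def IsBand (A : MagmaAlg) : Prop :=
  (∀ a b c : A.carrier, A.mul (A.mul a b) c = A.mul a (A.mul b c)) ∧
    (∀ a : A.carrier, A.mul a a = a)

/-- The variety `V₁` of bands satisfying `z·x·y = z·y·x`. -/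
def V1 : Set MagmaAlg :=
  {A | IsBand A ∧ ∀ z x y : A.carrier, A.mul (A.mul z x) y = A.mul (A.mul z y) x}

/-- The variety of semilattices (commutative bands). -/
def SL : Set MagmaAlg :=
  {A | IsBand A ∧ ∀ a b : A.carrier, A.mul a b = A.mul b a}

/-- Binary terms in variables `x`, `y`. -/
inductive BTerm : Type
  | x | y
  | mul (s t : BTerm)

def evalB (A : MagmaAlg) (a b : A.carrier) : BTerm → A.carrier
  | .x => a
  | .y => b
  | .mul s t => A.mul (evalB A a b s) (evalB A a b t)

/-- The derived algebra of `A` by the hypersubstitution sending the binary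
operation symbol to the binary term `t`. -/
def derivedAlg (A : MagmaAlg) (t : BTerm) : MagmaAlg :=
  ⟨A.carrier, fun a b => evalB A a b t⟩

/-- The derived variety `V_σ`: the variety generated by the derived algebras
(the models of their common identities). -/
def derivedVariety (V : Set MagmaAlg) (t : BTerm) : Set MagmaAlg :=
  {B | ∀ p q : MTerm, (∀ A ∈ V, sat (derivedAlg A t) p q) → sat B p q}




/-- The two-element left-zero band. -/
def LZ : MagmaAlg := ⟨Bool, fun a _ => a⟩

lemma LZ_mem_V1 : LZ ∈ V1 :=
  ⟨⟨fun _ _ _ => rfl, fun _ => rfl⟩, fun _ _ _ => rfl⟩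

lemma evalB_LZ (t : BTerm) :
    (∀ a b : Bool, evalB LZ a b t = a) ∨ (∀ a b : Bool, evalB LZ a b t = b) := by
  induction t with
  | x => exact Or.inl fun _ _ => rfl
  | y => exact Or.inr fun _ _ => rfl
  | mul s t ihs iht => exact ihs.imp (fun h a b => h a b) (fun h a b => h a b)

/-- The variety of semilattices is not a derived variety of `V₁`: no
hypersubstitution of type (2) yields it; in particular the derived identity
`x·y·x ≈ y·x·y` of commutativity under `σ₅` fails in `V₁`. -/
theorem SL_not_derived_of_V1 :
    (∀ t : BTerm, derivedVariety V1 t ≠ SL) ∧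
      ∃ A ∈ V1, ¬ sat A
        (MTerm.mul (MTerm.mul (MTerm.var 0) (MTerm.var 1)) (MTerm.var 0))
        (MTerm.mul (MTerm.mul (MTerm.var 1) (MTerm.var 0)) (MTerm.var 1)) := by
  constructor
  · intro t h
    have hmem : derivedAlg LZ t ∈ derivedVariety V1 t :=
      fun p q hpq => hpq LZ LZ_mem_V1
    rw [h] at hmem
    have hc := hmem.2
    rcases evalB_LZ t with h1 | h1
    · have := hc true false
      simp only [derivedAlg, h1] at this
      exact Bool.noConfusion this
    · have := hc true false
      simp only [derivedAlg, h1] at this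
      exact Bool.noConfusion this
  · refine ⟨LZ, LZ_mem_V1, fun hsat => ?_⟩
    have := hsat (fun n => n == 0)
    simp [MagmaAlg.eval, LZ] at this
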